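/- arXiv:1908.00963 — 3 statements merged into one kernel-verified Lean document; each statement's English description precedes it below -/
import Mathlib

section
/- Let M ∈ R^{n_r × n_c}, A ∈ R^{n_r × r}, B ∈ R^{n_c × r}. If every row of A has Euclidean norm at most a and every row of B has Euclidean norm at most b, then the spectral norm satisfies ||M ∘ (A B^T)||_S ≤ a b ||M||_S, where ∘ is the Hadamard product. -/
/-
Put `Z = diag(v) B`. The `i`-th entry of `(M ∘ ABᵀ) v` is the dot product of the `i`-th rows
of `A` and `MZ`, so Cauchy–Schwarz row by row gives `‖(M ∘ ABᵀ) v‖² ≤ a² ‖MZ‖_F²`. Applying `M`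
column by column gives `‖MZ‖_F ≤ ‖M‖_S ‖Z‖_F`, and `‖Z‖_F² = ∑ⱼ vⱼ² ‖Bⱼ‖² ≤ b² ‖v‖²`.
-/

open Matrix
open scoped Matrix

/-- The spectral norm (largest singular value) of a real matrix. -/
noncomputable def specNorm {m n : ℕ} (M : Matrix (Fin m) (Fin n) ℝ) : ℝ :=
  ‖LinearMap.toContinuousLinearMap (Matrix.toEuclideanLin M)‖

lemma sum_sq_mulVec_le_specNorm_sq {m n : ℕ} (M : Matrix (Fin m) (Fin n) ℝ) (v : Fin n → ℝ) :
    ∑ i, (M *ᵥ v) i ^ 2 ≤ specNorm M ^ 2 * ∑ j, v j ^ 2 := by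
  have h := pow_le_pow_left₀ (norm_nonneg _)
    ((LinearMap.toContinuousLinearMap (toEuclideanLin M)).le_opNorm (WithLp.toLp 2 v)) 2
  rwa [mul_pow, EuclideanSpace.real_norm_sq_eq, EuclideanSpace.real_norm_sq_eq] at h

lemma specNorm_le_of_sum_sq_mulVec_le {m n : ℕ} (M : Matrix (Fin m) (Fin n) ℝ) {C : ℝ}
    (hC : 0 ≤ C) (h : ∀ v, ∑ i, (M *ᵥ v) i ^ 2 ≤ C ^ 2 * ∑ j, v j ^ 2) :
    specNorm M ≤ C := by
  refine ContinuousLinearMap.opNorm_le_bound _ hC fun v => ?_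
  refine le_of_pow_le_pow_left₀ two_ne_zero (by positivity) ?_
  rw [mul_pow, EuclideanSpace.real_norm_sq_eq v, EuclideanSpace.real_norm_sq_eq]
  exact h v

lemma sum_sq_dotProduct_le {m κ : Type*} [Fintype m] [Fintype κ] (A W : Matrix m κ ℝ) {c : ℝ}
    (hA : ∀ i, ∑ k, A i k ^ 2 ≤ c) :
    ∑ i, (A i ⬝ᵥ W i) ^ 2 ≤ c * ∑ i, ∑ k, W i k ^ 2 := by
  rw [Finset.mul_sum]
  gcongr with i
  calc (A i ⬝ᵥ W i) ^ 2 ≤ (∑ k, A i k ^ 2) * ∑ k, W i k ^ 2 :=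
        Finset.sum_mul_sq_le_sq_mul_sq _ _ _
    _ ≤ c * ∑ k, W i k ^ 2 := by gcongr; exact hA i

lemma sum_sq_diagonal_mul_le {n κ : Type*} [Fintype n] [DecidableEq n] [Fintype κ]
    (B : Matrix n κ ℝ) {c : ℝ} (hB : ∀ j, ∑ k, B j k ^ 2 ≤ c) (v : n → ℝ) :
    ∑ j, ∑ k, (diagonal v * B) j k ^ 2 ≤ c * ∑ j, v j ^ 2 := by
  rw [Finset.mul_sum]
  gcongr with j
  simp only [diagonal_mul, mul_pow, ← Finset.mul_sum]
  rw [mul_comm c]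
  exact mul_le_mul_of_nonneg_left (hB j) (sq_nonneg _)

lemma sum_sq_mul_le_specNorm_sq {m n : ℕ} {κ : Type*} [Fintype κ]
    (M : Matrix (Fin m) (Fin n) ℝ) (Z : Matrix (Fin n) κ ℝ) :
    ∑ i, ∑ k, (M * Z) i k ^ 2 ≤ specNorm M ^ 2 * ∑ j, ∑ k, Z j k ^ 2 := by
  rw [Finset.sum_comm, Finset.sum_comm (γ := Fin n), Finset.mul_sum]
  gcongr with k
  exact sum_sq_mulVec_le_specNorm_sq M (Zᵀ k)

lemma hadamard_mul_transpose_mulVec {m n : Type*} {κ : Type*} [Fintype n] [DecidableEq n]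
    [Fintype κ] (M : Matrix m n ℝ) (A : Matrix m κ ℝ) (B : Matrix n κ ℝ) (v : n → ℝ) (i : m) :
    ((M ⊙ (A * Bᵀ)) *ᵥ v) i = A i ⬝ᵥ (M * diagonal v * B) i := by
  simp only [mulVec, dotProduct, hadamard_apply, mul_apply, transpose_apply, diagonal_apply,
    mul_ite, mul_zero, Finset.sum_ite_eq', Finset.mem_univ, if_true, Finset.mul_sum, Finset.sum_mul]
  rw [Finset.sum_comm]
  exact Finset.sum_congr rfl fun _ _ => Finset.sum_congr rfl fun _ _ => by ring

lemma sum_sq_hadamard_mul_transpose_mulVec_le {m n : ℕ} {κ : Type*} [Fintype κ]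
    (M : Matrix (Fin m) (Fin n) ℝ) (A : Matrix (Fin m) κ ℝ) (B : Matrix (Fin n) κ ℝ) {a b : ℝ}
    (hA : ∀ i, ∑ k, A i k ^ 2 ≤ a ^ 2) (hB : ∀ j, ∑ k, B j k ^ 2 ≤ b ^ 2) (v : Fin n → ℝ) :
    ∑ i, ((M ⊙ (A * Bᵀ)) *ᵥ v) i ^ 2 ≤ (a * b * specNorm M) ^ 2 * ∑ j, v j ^ 2 :=
  calc ∑ i, ((M ⊙ (A * Bᵀ)) *ᵥ v) i ^ 2
      = ∑ i, (A i ⬝ᵥ (M * (diagonal v * B)) i) ^ 2 := by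
        simp only [hadamard_mul_transpose_mulVec, Matrix.mul_assoc]
    _ ≤ a ^ 2 * ∑ i, ∑ k, (M * (diagonal v * B)) i k ^ 2 := sum_sq_dotProduct_le _ _ hA
    _ ≤ a ^ 2 * (specNorm M ^ 2 * ∑ j, ∑ k, (diagonal v * B) j k ^ 2) := by
        gcongr; exact sum_sq_mul_le_specNorm_sq _ _
    _ ≤ a ^ 2 * (specNorm M ^ 2 * (b ^ 2 * ∑ j, v j ^ 2)) := by
        gcongr; exact sum_sq_diagonal_mul_le _ hB _
    _ = (a * b * specNorm M) ^ 2 * ∑ j, v j ^ 2 := by ring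

/-- **Lemma 5.3**: if every row of `A` has norm at most `a` and every row of `B`
has norm at most `b`, then `‖M ∘ (A Bᵀ)‖_S ≤ a b ‖M‖_S`. -/
theorem specNorm_hadamard_factored_le {nr nc r : ℕ}
    (M : Matrix (Fin nr) (Fin nc) ℝ)
    (A : Matrix (Fin nr) (Fin r) ℝ) (B : Matrix (Fin nc) (Fin r) ℝ)
    (a b : ℝ)
    (hA : ∀ i : Fin nr, Real.sqrt (∑ k : Fin r, (A i k) ^ 2) ≤ a)
    (hB : ∀ j : Fin nc, Real.sqrt (∑ k : Fin r, (B j k) ^ 2) ≤ b) :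
    specNorm (M ⊙ (A * Bᵀ)) ≤ a * b * specNorm M := by
  by_cases hM : M = 0
  · simp [hM, specNorm]
  obtain ⟨i, j, -⟩ : ∃ i j, M i j ≠ 0 := by simpa [← Matrix.ext_iff] using hM
  have hA' i := Real.sqrt_le_iff.mp (hA i)
  have hB' j := Real.sqrt_le_iff.mp (hB j)
  have hC : 0 ≤ a * b * specNorm M :=
    mul_nonneg (mul_nonneg (hA' i).1 (hB' j).1) (norm_nonneg _)
  exact specNorm_le_of_sum_sq_mulVec_le _ hC
    (sum_sq_hadamard_mul_transpose_mulVec_le M A B (fun i => (hA' i).2) (fun j => (hB' j).2))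
end

section
/- Let U ∈ R^{n×r} have orthonormal columns, U_⊥ complete it to an orthogonal matrix. For a fixed index i, the equality Σ_{l=1}^n ⟨U_⊥^i, U_⊥^l⟩^2 ||U^l||_2^2 = Σ_{l=1}^n ⟨U^i, U^l⟩^2 ||U^l||_2^2 holds if and only if (1 − 2||U^i||_2^2)||U^i||_2^2 = 0, i.e., if and only if ||U^i||_2^2 ∈ {0, 1/2}. Specifically, the left side exceeds the right side by exactly (1 − 2||U^i||_2^2)||U^i||_2^2. -/
open Matrix

/-- The error in the claimed proof of Bhojanapalli–Jain: with `[U U⊥]`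
orthogonal, for fixed `i`, the quantity `∑ₗ ⟨U⊥ⁱ,U⊥ˡ⟩² ‖Uˡ‖²` exceeds
`∑ₗ ⟨Uⁱ,Uˡ⟩² ‖Uˡ‖²` by exactly `(1 − 2‖Uⁱ‖²)‖Uⁱ‖²`; hence the two agree iff
`‖Uⁱ‖² ∈ {0, 1/2}`. -/
theorem appendix_error_identity {n r : ℕ}
    (U : Matrix (Fin n) (Fin r) ℝ) (Up : Matrix (Fin n) (Fin (n - r)) ℝ)
    (h : U * Uᵀ + Up * Upᵀ = 1)
    (i : Fin n) :
    (∑ l : Fin n, (∑ k : Fin (n - r), Up i k * Up l k) ^ 2 * (∑ k : Fin r, (U l k) ^ 2))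
      = (∑ l : Fin n, (∑ k : Fin r, U i k * U l k) ^ 2 * (∑ k : Fin r, (U l k) ^ 2))
        + (1 - 2 * ∑ k : Fin r, (U i k) ^ 2) * (∑ k : Fin r, (U i k) ^ 2) ∧
    ((∑ l : Fin n, (∑ k : Fin (n - r), Up i k * Up l k) ^ 2 * (∑ k : Fin r, (U l k) ^ 2))
      = (∑ l : Fin n, (∑ k : Fin r, U i k * U l k) ^ 2 * (∑ k : Fin r, (U l k) ^ 2))
      ↔ (∑ k : Fin r, (U i k) ^ 2) = 0 ∨ (∑ k : Fin r, (U i k) ^ 2) = 1 / 2) := by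
  have hent : ∀ l : Fin n, (∑ k : Fin (n - r), Up i k * Up l k)
      = (if i = l then (1:ℝ) else 0) - ∑ k : Fin r, U i k * U l k := by
    intro l
    have h' := congrFun (congrFun h i) l
    simp only [Matrix.add_apply, Matrix.mul_apply, Matrix.transpose_apply,
      Matrix.one_apply] at h'
    rw [eq_sub_iff_add_eq, add_comm]
    exact h'
  have hii : (∑ k : Fin r, U i k * U i k) = ∑ k : Fin r, (U i k) ^ 2 := by
    simp [pow_two]
  have main : (∑ l : Fin n, (∑ k : Fin (n - r), Up i k * Up l k) ^ 2 * (∑ k : Fin r, (U l k) ^ 2))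
      = (∑ l : Fin n, (∑ k : Fin r, U i k * U l k) ^ 2 * (∑ k : Fin r, (U l k) ^ 2))
        + (1 - 2 * ∑ k : Fin r, (U i k) ^ 2) * (∑ k : Fin r, (U i k) ^ 2) := by
    have step : ∀ l : Fin n, (∑ k : Fin (n - r), Up i k * Up l k) ^ 2 * (∑ k : Fin r, (U l k) ^ 2)
        = (∑ k : Fin r, U i k * U l k) ^ 2 * (∑ k : Fin r, (U l k) ^ 2)
          + (if i = l then (1 - 2 * ∑ k : Fin r, U i k * U l k) * (∑ k : Fin r, (U l k) ^ 2) else 0) := by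
      intro l
      rw [hent l]
      split_ifs with hl <;> ring
    rw [Finset.sum_congr rfl (fun l _ => step l), Finset.sum_add_distrib,
      Finset.sum_ite_eq]
    simp [hii]
  refine ⟨main, ?_⟩
  rw [main]
  constructor
  · intro heq
    have h0 : (1 - 2 * ∑ k : Fin r, (U i k) ^ 2) * (∑ k : Fin r, (U i k) ^ 2) = 0 := by
      linarith
    rcases mul_eq_zero.mp h0 with h1 | h1
    · right; linarith
    · left; exact h1
  · rintro (h1 | h1) <;> rw [h1] <;> ring
end

section
/- Define W_0 = UV^T and recursively W_i = W_{i−1} − (1/α) P_T(E ∘ W_{i−1}), and Y_p = Σ_{i=0}^{p−1} (1/α) E ∘ W_i. Then E ∘ Y_p = Y_p, P_T(Y_p) = W_0 − W_p, and if ||(1/α)P_T(E∘Z) − Z||_F ≤ (θ+φ)||Z||_F for all Z ∈ T, then ||P_T(Y_p) − UV^T||_F ≤ (θ+φ)^p ||UV^T||_F. -/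
open Matrix Finset
open scoped Matrix

/-- The Frobenius norm of a real matrix. -/
noncomputable def frobNorm {m n : ℕ} (M : Matrix (Fin m) (Fin n) ℝ) : ℝ :=
  Real.sqrt (∑ i, ∑ j, (M i j) ^ 2)

/-- Orthogonal projection onto the subspace `T` spanned by matrices `U Bᵀ`
and `C Vᵀ`. -/
noncomputable def projT {nr nc r : ℕ} (U : Matrix (Fin nr) (Fin r) ℝ)
    (V : Matrix (Fin nc) (Fin r) ℝ) (Z : Matrix (Fin nr) (Fin nc) ℝ) :
    Matrix (Fin nr) (Fin nc) ℝ :=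
  U * Uᵀ * Z + Z * (V * Vᵀ) - U * Uᵀ * Z * (V * Vᵀ)

lemma frobNorm_nonneg {m n : ℕ} (M : Matrix (Fin m) (Fin n) ℝ) : 0 ≤ frobNorm M :=
  Real.sqrt_nonneg _

lemma frobNorm_neg {m n : ℕ} (M : Matrix (Fin m) (Fin n) ℝ) :
    frobNorm (-M) = frobNorm M := by
  simp [frobNorm, neg_sq]

lemma frobNorm_pos {m n : ℕ} (M : Matrix (Fin m) (Fin n) ℝ) (h : M ≠ 0) :
    0 < frobNorm M := by
  apply Real.sqrt_pos.mpr
  obtain ⟨i, j, hij⟩ : ∃ i j, M i j ≠ 0 := by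
    by_contra hc; push_neg at hc
    exact h (by ext i j; simp [hc])
  have h1 : 0 < ∑ j', (M i j') ^ 2 := by
    apply Finset.sum_pos' (fun _ _ => sq_nonneg _) ⟨j, Finset.mem_univ _, by positivity⟩
  exact Finset.sum_pos' (fun _ _ => Finset.sum_nonneg fun _ _ => sq_nonneg _)
    ⟨i, Finset.mem_univ _, h1⟩

lemma projT_zero {nr nc r : ℕ} (U : Matrix (Fin nr) (Fin r) ℝ)
    (V : Matrix (Fin nc) (Fin r) ℝ) : projT U V 0 = 0 := by
  simp [projT]

lemma projT_add {nr nc r : ℕ} (U : Matrix (Fin nr) (Fin r) ℝ)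
    (V : Matrix (Fin nc) (Fin r) ℝ) (Z1 Z2 : Matrix (Fin nr) (Fin nc) ℝ) :
    projT U V (Z1 + Z2) = projT U V Z1 + projT U V Z2 := by
  simp only [projT, Matrix.mul_add, Matrix.add_mul]; abel

lemma projT_sub {nr nc r : ℕ} (U : Matrix (Fin nr) (Fin r) ℝ)
    (V : Matrix (Fin nc) (Fin r) ℝ) (Z1 Z2 : Matrix (Fin nr) (Fin nc) ℝ) :
    projT U V (Z1 - Z2) = projT U V Z1 - projT U V Z2 := by
  simp only [projT, Matrix.mul_sub, Matrix.sub_mul]; abel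

lemma projT_smul {nr nc r : ℕ} (U : Matrix (Fin nr) (Fin r) ℝ)
    (V : Matrix (Fin nc) (Fin r) ℝ) (a : ℝ) (Z : Matrix (Fin nr) (Fin nc) ℝ) :
    projT U V (a • Z) = a • projT U V Z := by
  simp only [projT, Matrix.mul_smul, Matrix.smul_mul, smul_add, smul_sub]

lemma projT_idem {nr nc r : ℕ} (U : Matrix (Fin nr) (Fin r) ℝ)
    (V : Matrix (Fin nc) (Fin r) ℝ) (hU : Uᵀ * U = 1) (hV : Vᵀ * V = 1)
    (Z : Matrix (Fin nr) (Fin nc) ℝ) :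
    projT U V (projT U V Z) = projT U V Z := by
  have hU' : ∀ (k : Type) [Fintype k] (X : Matrix (Fin r) k ℝ), Uᵀ * (U * X) = X :=
    fun k _ X => by rw [← Matrix.mul_assoc, hU, Matrix.one_mul]
  have hV' : ∀ (k : Type) [Fintype k] (X : Matrix (Fin r) k ℝ), Vᵀ * (V * X) = X :=
    fun k _ X => by rw [← Matrix.mul_assoc, hV, Matrix.one_mul]
  simp only [projT, Matrix.mul_add, Matrix.add_mul, Matrix.mul_sub, Matrix.sub_mul,
    Matrix.mul_assoc, hU', hV']
  abel

lemma projT_UV {nr nc r : ℕ} (U : Matrix (Fin nr) (Fin r) ℝ)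
    (V : Matrix (Fin nc) (Fin r) ℝ) (hU : Uᵀ * U = 1) (hV : Vᵀ * V = 1) :
    projT U V (U * Vᵀ) = U * Vᵀ := by
  have hU' : ∀ (k : Type) [Fintype k] (X : Matrix (Fin r) k ℝ), Uᵀ * (U * X) = X :=
    fun k _ X => by rw [← Matrix.mul_assoc, hU, Matrix.one_mul]
  have hV' : ∀ (k : Type) [Fintype k] (X : Matrix (Fin r) k ℝ), Vᵀ * (V * X) = X :=
    fun k _ X => by rw [← Matrix.mul_assoc, hV, Matrix.one_mul]
  simp only [projT, Matrix.mul_assoc, hU', hV']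
  abel

/-- The recursion `W₀ = UVᵀ`, `Wᵢ = Wᵢ₋₁ − (1/α)P_T(E ∘ Wᵢ₋₁)`,
`Y_p = ∑_{i<p} (1/α) E ∘ Wᵢ` satisfies `E ∘ Y_p = Y_p`,
`P_T(Y_p) = W₀ − W_p`, and, if the restricted map contracts by `θ + φ`,
`‖P_T(Y_p) − UVᵀ‖_F ≤ (θ+φ)^p ‖UVᵀ‖_F`. -/
theorem dual_certificate_recursion {nr nc r : ℕ}
    (U : Matrix (Fin nr) (Fin r) ℝ) (V : Matrix (Fin nc) (Fin r) ℝ)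
    (hU : Uᵀ * U = 1) (hV : Vᵀ * V = 1)
    (E : Matrix (Fin nr) (Fin nc) ℝ)
    (h01 : ∀ i j, E i j = 0 ∨ E i j = 1)
    (α : ℝ) (hα : α ∈ Set.Ioc (0 : ℝ) 1)
    (θ φ : ℝ)
    (W : ℕ → Matrix (Fin nr) (Fin nc) ℝ)
    (hW0 : W 0 = U * Vᵀ)
    (hWrec : ∀ i : ℕ, W (i + 1) = W i - (1 / α) • projT U V (E ⊙ W i))
    (Y : ℕ → Matrix (Fin nr) (Fin nc) ℝ)
    (hY : ∀ p : ℕ, Y p = ∑ i ∈ Finset.range p, (1 / α) • (E ⊙ W i))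
    (p : ℕ) :
    E ⊙ Y p = Y p ∧
    projT U V (Y p) = W 0 - W p ∧
    ((∀ Z : Matrix (Fin nr) (Fin nc) ℝ, projT U V Z = Z →
        frobNorm ((1 / α) • projT U V (E ⊙ Z) - Z) ≤ (θ + φ) * frobNorm Z) →
      frobNorm (projT U V (Y p) - U * Vᵀ) ≤ (θ + φ) ^ p * frobNorm (U * Vᵀ)) := by
  -- Part 1
  have part1 : E ⊙ Y p = Y p := by
    rw [hY]
    ext i j
    simp only [Matrix.hadamard_apply, Matrix.sum_apply, Matrix.smul_apply, Finset.mul_sum]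
    refine Finset.sum_congr rfl fun k _ => ?_
    rcases h01 i j with h | h <;> simp [h, Matrix.hadamard_apply]
  -- Part 2 (for all q)
  have part2 : ∀ q : ℕ, projT U V (Y q) = W 0 - W q := by
    intro q
    induction q with
    | zero => simp [hY, projT_zero]
    | succ q ih =>
      have h1 : Y (q + 1) = Y q + (1 / α) • (E ⊙ W q) := by
        rw [hY, hY, Finset.sum_range_succ]
      rw [h1, projT_add, projT_smul, ih, hWrec q]
      abel
  refine ⟨part1, part2 p, fun hyp => ?_⟩
  -- membership of W i in T
  have hWT : ∀ i, projT U V (W i) = W i := by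
    intro i
    induction i with
    | zero => rw [hW0]; exact projT_UV U V hU hV
    | succ i ih =>
      rw [hWrec i, projT_sub, projT_smul, ih, projT_idem U V hU hV]
  -- contraction step
  have hstep : ∀ i, frobNorm (W (i + 1)) ≤ (θ + φ) * frobNorm (W i) := by
    intro i
    have h1 := hyp (W i) (hWT i)
    have h2 : W (i + 1) = -((1 / α) • projT U V (E ⊙ W i) - W i) := by
      rw [hWrec i]; abel
    rw [h2, frobNorm_neg]
    exact h1
  rw [part2 p, hW0]
  have hgoal : frobNorm (W 0 - W p - W 0) = frobNorm (W p) := by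
    rw [show W 0 - W p - W 0 = -(W p) from by abel, frobNorm_neg]
  rw [← hW0, hgoal]
  -- case split
  by_cases h0 : U * Vᵀ = 0
  · have hWz : ∀ i, W i = 0 := by
      intro i
      induction i with
      | zero => rw [hW0, h0]
      | succ i ih => simp [hWrec i, ih, projT_zero, Matrix.hadamard_zero]
    simp [hWz p, hW0, h0, frobNorm, Real.sqrt_zero]
  · have hc : 0 < frobNorm (U * Vᵀ) := frobNorm_pos _ h0
    have hθφ : 0 ≤ θ + φ := by
      have h1 := hstep 0
      have h2 := frobNorm_nonneg (W 1)
      rw [hW0] at h1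
      nlinarith
    have hbound : ∀ q : ℕ, frobNorm (W q) ≤ (θ + φ) ^ q * frobNorm (U * Vᵀ) := by
      intro q
      induction q with
      | zero => simp [hW0]
      | succ q ih =>
        calc frobNorm (W (q + 1)) ≤ (θ + φ) * frobNorm (W q) := hstep q
          _ ≤ (θ + φ) * ((θ + φ) ^ q * frobNorm (U * Vᵀ)) :=
              mul_le_mul_of_nonneg_left ih hθφ
          _ = (θ + φ) ^ (q + 1) * frobNorm (U * Vᵀ) := by ring
    rw [hW0]
    exact hbound p
end
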